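/- With the Witt algebra W = ⊕_{n≥0} K x_n, [x_n,x_m]₀ = (n−m)x_{n+m}, α₀(x_n) = 2x_n, and [x_n,x_m]₁ = ((n−m)(n+m−1)/2) x_{n+m}, the cyclic sum over (p,q,r) of [α₀(x_p),[x_q,x_r]₀]₁ + [α₀(x_p),[x_q,x_r]₁]₀ does NOT vanish identically; i.e., there exist p, q, r ≥ 0 for which it is nonzero. -/
import Mathlib


/-- Generator `x_n` of the Witt algebra `W_{≥0} = ⊕_{n≥0} K x_n`. -/
noncomputable def wittGen (K : Type*) [Field K] (n : ℕ) : ℕ →₀ K :=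
  Finsupp.single n (1 : K)

/-- The Witt bracket `[x_n, x_m]₀ = (n - m) x_{n+m}`, extended bilinearly. -/
noncomputable def wittBr0 {K : Type*} [Field K] (u v : ℕ →₀ K) : ℕ →₀ K :=
  u.sum fun n a => v.sum fun m b =>
    (a * b * ((n : K) - (m : K))) • Finsupp.single (n + m) (1 : K)

/-- The first-order bracket `[x_n, x_m]₁ = ((n-m)(n+m-1)/2) x_{n+m}`, extended
bilinearly. -/
noncomputable def wittBr1 {K : Type*} [Field K] (u v : ℕ →₀ K) : ℕ →₀ K :=
  u.sum fun n a => v.sum fun m b =>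
    (a * b * (((n : K) - (m : K)) * ((n : K) + (m : K) - 1) / 2)) •
      Finsupp.single (n + m) (1 : K)

/-- The map `α₀(x_n) = 2 x_n`, extended linearly. -/
noncomputable def wittA0 {K : Type*} [Field K] (u : ℕ →₀ K) : ℕ →₀ K :=
  u.sum fun n a => (2 * a) • Finsupp.single n (1 : K)

/-- The map `α₁(x_n) = n x_n`, extended linearly. -/
noncomputable def wittA1 {K : Type*} [Field K] (u : ℕ →₀ K) : ℕ →₀ K :=
  u.sum fun n a => ((n : K) * a) • Finsupp.single n (1 : K)

lemma wittA0_single {K : Type*} [Field K] (n : ℕ) (a : K) :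
    wittA0 (Finsupp.single n a) = (2 * a) • Finsupp.single n (1 : K) := by
  simp [wittA0, Finsupp.sum_single_index]

lemma wittBr0_single {K : Type*} [Field K] (n m : ℕ) (a b : K) :
    wittBr0 (Finsupp.single n a) (Finsupp.single m b)
      = (a * b * ((n : K) - (m : K))) • Finsupp.single (n + m) (1 : K) := by
  simp [wittBr0, Finsupp.sum_single_index]

lemma wittBr1_single {K : Type*} [Field K] (n m : ℕ) (a b : K) :
    wittBr1 (Finsupp.single n a) (Finsupp.single m b)
      = (a * b * (((n : K) - (m : K)) * ((n : K) + (m : K) - 1) / 2))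
          • Finsupp.single (n + m) (1 : K) := by
  simp [wittBr1, Finsupp.sum_single_index]

lemma wittBr0_smul_single {K : Type*} [Field K] (n m : ℕ) (a b c d : K) :
    wittBr0 (c • Finsupp.single n a) (d • Finsupp.single m b)
      = (c * d * (a * b * ((n : K) - (m : K)))) • Finsupp.single (n + m) (1 : K) := by
  rw [Finsupp.smul_single, Finsupp.smul_single, smul_eq_mul, smul_eq_mul,
    wittBr0_single]
  ring_nf

lemma wittBr1_smul_single {K : Type*} [Field K] (n m : ℕ) (a b c d : K) :
    wittBr1 (c • Finsupp.single n a) (d • Finsupp.single m b)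
      = (c * d * (a * b * (((n : K) - (m : K)) * ((n : K) + (m : K) - 1) / 2)))
          • Finsupp.single (n + m) (1 : K) := by
  rw [Finsupp.smul_single, Finsupp.smul_single, smul_eq_mul, smul_eq_mul,
    wittBr1_single]
  ring_nf

/-- The cyclic sum `↺_{p,q,r} ([α₀(x_p),[x_q,x_r]₀]₁ + [α₀(x_p),[x_q,x_r]₁]₀)` does
NOT vanish identically on the Witt algebra `W_{≥0}`. -/
theorem witt_cyclic_sum_without_alpha1_ne_zero
    {K : Type*} [Field K] [CharZero K] :
    ∃ p q r : ℕ,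
      (wittBr1 (wittA0 (wittGen K p)) (wittBr0 (wittGen K q) (wittGen K r))
        + wittBr0 (wittA0 (wittGen K p)) (wittBr1 (wittGen K q) (wittGen K r)))
      + (wittBr1 (wittA0 (wittGen K q)) (wittBr0 (wittGen K r) (wittGen K p))
        + wittBr0 (wittA0 (wittGen K q)) (wittBr1 (wittGen K r) (wittGen K p)))
      + (wittBr1 (wittA0 (wittGen K r)) (wittBr0 (wittGen K p) (wittGen K q))
        + wittBr0 (wittA0 (wittGen K r)) (wittBr1 (wittGen K p) (wittGen K q))) ≠ 0 := by
  refine ⟨0, 1, 2, fun h => ?_⟩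
  rw [show (wittGen K 0) = Finsupp.single 0 (1:K) from rfl,
      show (wittGen K 1) = Finsupp.single 1 (1:K) from rfl,
      show (wittGen K 2) = Finsupp.single 2 (1:K) from rfl] at h
  rw [wittA0_single, wittA0_single, wittA0_single, wittBr0_single, wittBr0_single,
      wittBr0_single, wittBr1_single, wittBr1_single, wittBr1_single,
      wittBr0_smul_single, wittBr0_smul_single, wittBr0_smul_single,
      wittBr1_smul_single, wittBr1_smul_single, wittBr1_smul_single] at h
  norm_num [← add_smul, Finsupp.smul_single, Finsupp.single_eq_zero] at h
  simp only [← Finsupp.single_neg, ← Finsupp.single_add, Finsupp.single_eq_zero] at h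
  norm_num at h
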